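/- arXiv:2011.03650 — 11 statements merged into one kernel-verified Lean document; each statement's English description precedes it below -/
import Mathlib

section
/- Let J = !![a, b; c, d] be a real 2×2 matrix and set m = (a+d)/2, h = (a−d)/2, p = (b+c)/2, z = (c−b)/2. Then (a < 0 and d < 0 and J is Hurwitz) holds if and only if (m < −|h| and m² + z² > h² + p²). (In game terms: the fixed point is both a differential Nash equilibrium and stable iff these coordinate conditions hold.) -/
/-- A real matrix is Hurwitz (stable) if every eigenvalue of the matrix,
viewed as a matrix over `ℂ`, has negative real part. -/
def IsHurwitz {n : ℕ} (J : Matrix (Fin n) (Fin n) ℝ) : Prop :=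
  ∀ μ ∈ spectrum ℂ (J.map Complex.ofReal), μ.re < 0

lemma mem_spec_charpoly (a b c d : ℝ) (μ : ℂ) :
    μ ∈ spectrum ℂ ((!![a,b;c,d]).map Complex.ofReal) ↔
      μ^2 - (a+d)*μ + (a*d - b*c) = 0 := by
  rw [spectrum.mem_iff, Matrix.isUnit_iff_isUnit_det, isUnit_iff_ne_zero, not_ne_iff,
    Matrix.det_fin_two]
  simp [Matrix.algebraMap_eq_diagonal, Matrix.map_apply]
  constructor <;> intro h <;> linear_combination h

theorem nash_and_stable_iff (a b c d m h p z : ℝ)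
    (hm : m = (a + d) / 2) (hh : h = (a - d) / 2)
    (hp : p = (b + c) / 2) (hz : z = (c - b) / 2) :
    (a < 0 ∧ d < 0 ∧ IsHurwitz !![a, b; c, d]) ↔
      (m < -|h| ∧ m ^ 2 + z ^ 2 > h ^ 2 + p ^ 2) := by
  have hdet : m ^ 2 + z ^ 2 - (h ^ 2 + p ^ 2) = a * d - b * c := by
    subst hm hh hp hz; ring
  constructor
  · rintro ⟨ha, hd, hw⟩
    constructor
    · rcases abs_cases h with ⟨e, _⟩ | ⟨e, _⟩ <;> rw [e, hm, hh] <;> linarith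
    · by_contra hc
      push_neg at hc
      have hdle : a * d - b * c ≤ 0 := by linarith [hdet]
      set s := Real.sqrt (m ^ 2 - (a * d - b * c)) with hs
      have hs2 : s ^ 2 = m ^ 2 - (a * d - b * c) :=
        Real.sq_sqrt (by nlinarith [sq_nonneg m])
      have hsm : |m| ≤ s := by
        rw [← Real.sqrt_sq_eq_abs]
        exact Real.sqrt_le_sqrt (by linarith)
      have hmem : ((m + s : ℝ) : ℂ) ∈ spectrum ℂ ((!![a,b;c,d]).map Complex.ofReal) := by
        rw [mem_spec_charpoly]
        have : (m + s) ^ 2 - (a + d) * (m + s) + (a * d - b * c) = 0 := by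
          have h2m : a + d = 2 * m := by rw [hm]; ring
          rw [h2m]; nlinarith [hs2]
        push_cast
        exact_mod_cast (by exact_mod_cast congrArg (Complex.ofReal) this : _)
      have := hw _ hmem
      simp at this
      linarith [neg_abs_le m, le_abs_self m]
  · rintro ⟨h1, h2⟩
    have hha : h ≤ |h| := le_abs_self h
    have hhb : -|h| ≤ h := neg_abs_le h
    have e1 : a = m + h := by rw [hm, hh]; ring
    have e2 : d = m - h := by rw [hm, hh]; ring
    have ha : a < 0 := by rw [e1]; linarith
    have hd : d < 0 := by rw [e2]; linarith
    have hm0 : m < 0 := lt_of_lt_of_le h1 (by simp [neg_nonpos, abs_nonneg])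
    have hdp : 0 < a * d - b * c := by linarith [hdet]
    refine ⟨ha, hd, ?_⟩
    intro μ hμ
    rw [mem_spec_charpoly] at hμ
    obtain ⟨x, y⟩ := μ
    rw [Complex.ext_iff] at hμ
    simp [pow_two, Complex.mul_re, Complex.mul_im] at hμ
    obtain ⟨hre, him⟩ := hμ
    show x < 0
    have h2m : a + d = 2 * m := by rw [hm]; ring
    by_contra hx
    push_neg at hx
    have hy : y = 0 := by
      rcases mul_eq_zero.mp (show y * (x - m) = 0 by nlinarith [him]) with h' | h'
      · exact h'
      · nlinarith
    subst hy
    nlinarith [hre]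
end

section
/- Let J = !![a, b; c, d] be a real 2×2 matrix and set m = (a+d)/2, h = (a−d)/2, p = (b+c)/2, z = (c−b)/2. Then (a < 0 and d < 0 and J is not Hurwitz) holds if and only if (m < −|h| and m² + z² ≤ h² + p²). (In game terms: the fixed point is a differential Nash equilibrium that is unstable iff these coordinate conditions hold.) -/
lemma spec_mem_iff (a b c d : ℝ) (μ : ℂ) :
    μ ∈ spectrum ℂ ((!![a, b; c, d]).map Complex.ofReal) ↔
      (μ - a) * (μ - d) - b * c = 0 := by
  rw [spectrum.mem_iff]
  rw [show ¬IsUnit ((algebraMap ℂ (Matrix (Fin 2) (Fin 2) ℂ)) μ - !![a, b; c, d].map Complex.ofReal) ↔ ¬ IsUnit ((algebraMap ℂ (Matrix (Fin 2) (Fin 2) ℂ)) μ - !![a, b; c, d].map Complex.ofReal).det from not_congr (Matrix.isUnit_iff_isUnit_det _)]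
  rw [isUnit_iff_ne_zero, not_ne_iff]
  have : (algebraMap ℂ (Matrix (Fin 2) (Fin 2) ℂ)) μ - (!![a, b; c, d]).map Complex.ofReal
      = !![μ - a, -b; -c, μ - d] := by
    ext i j
    fin_cases i <;> fin_cases j <;>
      simp [Matrix.algebraMap_eq_diagonal, Matrix.map, Matrix.diagonal]
  rw [this, Matrix.det_fin_two]
  simp

theorem nash_and_unstable_iff (a b c d m h p z : ℝ)
    (hm : m = (a + d) / 2) (hh : h = (a - d) / 2)
    (hp : p = (b + c) / 2) (hz : z = (c - b) / 2) :
    (a < 0 ∧ d < 0 ∧ ¬ IsHurwitz !![a, b; c, d]) ↔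
      (m < -|h| ∧ m ^ 2 + z ^ 2 ≤ h ^ 2 + p ^ 2) := by
  subst hm hh hp hz
  constructor
  · rintro ⟨ha, hd, hNH⟩
    constructor
    · rw [lt_neg, abs_lt]
      constructor <;> linarith
    · rw [IsHurwitz] at hNH
      push_neg at hNH
      obtain ⟨μ, hmem, hre⟩ := hNH
      rw [spec_mem_iff] at hmem
      rw [Complex.ext_iff] at hmem
      obtain ⟨e1, e2⟩ := hmem
      set x := μ.re
      set y := μ.im
      simp [Complex.mul_re, Complex.mul_im] at e1 e2
      -- e2 : y * (2x - a - d) = 0 (in some form)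
      rcases mul_eq_zero.mp (show y * (x - a + (x - d)) = 0 by linarith [e2]) with hy | hx
      · nlinarith [mul_nonneg hre (show (0:ℝ) ≤ x - a - d by linarith), e1]
      · -- x = (a+d)/2 < 0, contradiction with x ≥ 0
        linarith
  · rintro ⟨h1, h2⟩
    have hle := le_abs_self ((a - d) / 2)
    have hnle := neg_abs_le ((a - d) / 2)
    refine ⟨by linarith, by linarith, ?_⟩
    set Δ : ℝ := ((a - d) / 2) ^ 2 + ((b + c) / 2) ^ 2 - ((c - b) / 2) ^ 2 with hΔ
    have hΔ0 : 0 ≤ Δ := by rw [hΔ]; nlinarith [sq_nonneg ((a + d) / 2)]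
    set s : ℝ := Real.sqrt Δ with hs
    have hs2 : s ^ 2 = Δ := Real.sq_sqrt hΔ0
    have hsm : -((a + d) / 2) ≤ s := by
      have : Real.sqrt (((a + d) / 2) ^ 2) ≤ s := Real.sqrt_le_sqrt (by linarith)
      rw [Real.sqrt_sq_eq_abs] at this
      linarith [neg_abs_le ((a + d) / 2)]
    intro H
    have hreal : ((a + d) / 2 + s - a) * ((a + d) / 2 + s - d) - b * c = 0 := by
      linear_combination hs2
    have hmem : (((a + d) / 2 + s : ℝ) : ℂ) ∈ spectrum ℂ ((!![a, b; c, d]).map Complex.ofReal) := by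
      rw [spec_mem_iff]
      exact_mod_cast congrArg (Complex.ofReal) hreal
    have := H _ hmem
    simp at this
    linarith
end

section
/- Let J = !![a, b; c, d] be a real 2×2 matrix and set m = (a+d)/2, h = (a−d)/2, p = (b+c)/2, z = (c−b)/2. Then (¬(a < 0 and d < 0) and J is Hurwitz) holds if and only if (−|h| ≤ m < 0 and m² + z² > h² + p²). (In game terms: the fixed point is a stable non-Nash equilibrium iff these coordinate conditions hold.) -/
lemma mem_spec (a b c d : ℝ) (μ : ℂ) :
    μ ∈ spectrum ℂ ((!![a,b;c,d]).map Complex.ofReal) ↔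
      μ^2 - ((a:ℂ)+d)*μ + ((a:ℂ)*d - b*c) = 0 := by
  rw [spectrum.mem_iff, Matrix.isUnit_iff_isUnit_det, isUnit_iff_ne_zero, not_not]
  have h1 : ((algebraMap ℂ (Matrix (Fin 2) (Fin 2) ℂ)) μ - (!![a,b;c,d]).map Complex.ofReal)
      = !![μ - a, -b; -c, μ - d] := by
    ext i j; fin_cases i <;> fin_cases j <;>
      simp [Matrix.algebraMap_matrix_apply]
  rw [h1, Matrix.det_fin_two_of]
  constructor <;> intro h2 <;> linear_combination h2

lemma hurwitz_iff (a b c d : ℝ) :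
    IsHurwitz !![a,b;c,d] ↔ a + d < 0 ∧ 0 < a*d - b*c := by
  constructor
  · intro H
    have key : ∀ μ : ℂ, μ^2 - ((a:ℂ)+d)*μ + ((a:ℂ)*d - b*c) = 0 → μ.re < 0 := by
      intro μ hμ
      exact H μ ((mem_spec a b c d μ).2 hμ)
    by_cases hΔ : 0 ≤ (a+d)^2 - 4*(a*d - b*c)
    · have hs2 : (Real.sqrt ((a+d)^2 - 4*(a*d-b*c)))^2 = (a+d)^2 - 4*(a*d-b*c) :=
        Real.sq_sqrt hΔ
      set s := Real.sqrt ((a+d)^2 - 4*(a*d-b*c)) with hsdef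
      have hs2' : ((s:ℂ))^2 = ((a:ℂ)+d)^2 - 4*((a:ℂ)*d - b*c) := by
        exact_mod_cast congrArg Complex.ofReal hs2
      have h1 : ((((a+d) + s)/2 : ℝ) : ℂ)^2 - ((a:ℂ)+d)*((((a+d) + s)/2 : ℝ):ℂ)
          + ((a:ℂ)*d - b*c) = 0 := by
        push_cast; linear_combination ((1:ℂ)/4) * hs2'
      have h2 : ((((a+d) - s)/2 : ℝ) : ℂ)^2 - ((a:ℂ)+d)*((((a+d) - s)/2 : ℝ):ℂ)
          + ((a:ℂ)*d - b*c) = 0 := by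
        push_cast; linear_combination ((1:ℂ)/4) * hs2'
      have r1 := key _ h1
      have r2 := key _ h2
      rw [Complex.ofReal_re] at r1 r2
      have hs0 : 0 ≤ s := Real.sqrt_nonneg _
      constructor
      · linarith
      · nlinarith
    · push_neg at hΔ
      have hs2 : (Real.sqrt (4*(a*d-b*c) - (a+d)^2))^2 = 4*(a*d-b*c) - (a+d)^2 :=
        Real.sq_sqrt (by linarith)
      set s := Real.sqrt (4*(a*d-b*c) - (a+d)^2) with hsdef
      have hs2' : ((s:ℂ))^2 = 4*((a:ℂ)*d - b*c) - ((a:ℂ)+d)^2 := by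
        exact_mod_cast congrArg Complex.ofReal hs2
      have h1 : (((a:ℂ)+d)/2 + (s:ℂ)/2 * Complex.I)^2
          - ((a:ℂ)+d)*(((a:ℂ)+d)/2 + (s:ℂ)/2*Complex.I) + ((a:ℂ)*d - b*c) = 0 := by
        linear_combination (((s:ℂ))^2/4) * Complex.I_sq + (-(1:ℂ)/4) * hs2'
      have r1 := key _ h1
      simp at r1
      constructor
      · linarith
      · nlinarith
  · rintro ⟨hT0, hD0⟩ μ hμ
    rw [mem_spec] at hμ
    have him := congrArg Complex.im hμ
    have hre := congrArg Complex.re hμ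
    simp [pow_two, Complex.add_im, Complex.mul_im, Complex.mul_re, Complex.add_re,
      Complex.sub_re, Complex.sub_im] at him hre
    by_contra hx
    push_neg at hx
    rcases mul_eq_zero.1 (show μ.im * (2*μ.re - (a+d)) = 0 from by linear_combination him)
      with hy | hxT
    · rw [hy] at hre
      nlinarith [mul_nonneg hx hx]
    · linarith

theorem nonNash_and_stable_iff (a b c d m h p z : ℝ)
    (hm : m = (a + d) / 2) (hh : h = (a - d) / 2)
    (hp : p = (b + c) / 2) (hz : z = (c - b) / 2) :
    (¬ (a < 0 ∧ d < 0) ∧ IsHurwitz !![a, b; c, d]) ↔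
      ((-|h| ≤ m ∧ m < 0) ∧ m ^ 2 + z ^ 2 > h ^ 2 + p ^ 2) := by
  subst hm hh hp hz
  rw [hurwitz_iff]
  have key : ((a+d)/2)^2 + ((c-b)/2)^2 - ((a-d)/2)^2 - ((b+c)/2)^2 = a*d - b*c := by ring
  rcases abs_cases ((a-d)/2) with ⟨he, h0⟩ | ⟨he, h0⟩ <;> rw [he] <;> constructor
  · rintro ⟨hn, hT, hD⟩
    push_neg at hn
    constructor
    · constructor
      · by_cases ha : a < 0
        · have := hn ha; linarith
        · push_neg at ha; linarith
      · linarith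
    · linarith
  · rintro ⟨⟨hnn, hT⟩, hD⟩
    refine ⟨fun ⟨ha, _⟩ => by linarith, by linarith, by linarith⟩
  · rintro ⟨hn, hT, hD⟩
    push_neg at hn
    constructor
    · constructor
      · by_cases ha : a < 0
        · have := hn ha; linarith
        · push_neg at ha; linarith
      · linarith
    · linarith
  · rintro ⟨⟨hnn, hT⟩, hD⟩
    refine ⟨fun ⟨_, hd⟩ => by linarith, by linarith, by linarith⟩
end

section
/- Let a, b, c, d : ℝ, set m = (a+d)/2 and h = (a−d)/2, and for τ > 0 let J_τ = !![a, b; τ*c, τ*d]. If det !![a, b; c, d] > 0 and m < |h|, then there exists τ > 0 such that J_τ is Hurwitz. (A fixed point with positive Jacobian determinant and m < |h| can be stabilized by some choice of learning-rate ratio.) -/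
/-!
The eigenvalues of a real 2×2 matrix are the roots of `μ² - (tr A) μ + det A`, so the matrix is
Hurwitz as soon as its trace is negative and its determinant positive. Rescaling the second row
by `τ > 0` multiplies the determinant by `τ` and turns the trace into `a + τ d`. Since
`m - |h| = min a d`, the hypothesis `m < |h|` says that `a` or `d` is negative, and then a very
small or a very large `τ` makes the trace negative.
-/

open Matrix

lemma Complex.re_neg_of_sq_sub_mul_add_eq_zero {t Δ : ℝ} (ht : t < 0) (hΔ : 0 < Δ) {μ : ℂ}
    (hμ : μ ^ 2 - t * μ + Δ = 0) : μ.re < 0 := by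
  have hre : μ.re ^ 2 - μ.im ^ 2 - t * μ.re + Δ = 0 := by
    simpa [pow_two] using congrArg Complex.re hμ
  have him : μ.im * (2 * μ.re - t) = 0 := by
    have := congrArg Complex.im hμ
    simp only [pow_two, Complex.add_im, Complex.sub_im, Complex.mul_im, Complex.ofReal_re,
      Complex.ofReal_im, Complex.zero_im] at this
    linarith
  -- a real root is negative since the quadratic is positive on `[0, ∞)`; otherwise `re μ = t / 2`
  rcases mul_eq_zero.mp him with hreal | hcentre
  · nlinarith
  · linarith

lemma Matrix.sq_sub_trace_mul_add_det_eq_zero_of_mem_spectrum {A : Matrix (Fin 2) (Fin 2) ℝ}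
    {μ : ℂ} (hμ : μ ∈ spectrum ℂ (A.map Complex.ofReal)) :
    μ ^ 2 - A.trace * μ + A.det = 0 := by
  rw [mem_spectrum_iff_isRoot_charpoly, charpoly_fin_two] at hμ
  simpa [trace_fin_two, det_fin_two, sq] using hμ

lemma isHurwitz_of_trace_neg_of_det_pos {A : Matrix (Fin 2) (Fin 2) ℝ} (htr : A.trace < 0)
    (hdet : 0 < A.det) : IsHurwitz A := fun _ hμ ↦
  Complex.re_neg_of_sq_sub_mul_add_eq_zero htr hdet
    (sq_sub_trace_mul_add_det_eq_zero_of_mem_spectrum hμ)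

lemma exists_pos_add_mul_neg {a d : ℝ} (h : a < 0 ∨ d < 0) : ∃ τ > 0, a + τ * d < 0 := by
  rcases h with ha | hd
  · have hτ : 0 < -a / (|d| + 1) := div_pos (neg_pos.mpr ha) (by positivity)
    refine ⟨_, hτ, ?_⟩
    calc a + -a / (|d| + 1) * d ≤ a + -a / (|d| + 1) * |d| := by
          gcongr; exact le_abs_self d
      _ < a + -a / (|d| + 1) * (|d| + 1) := by gcongr; linarith
      _ = 0 := by field_simp; ring
  · refine ⟨(|a| + 1) / -d, div_pos (by positivity) (neg_pos.mpr hd), ?_⟩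
    have : (|a| + 1) / -d * d = -(|a| + 1) := by field_simp [hd.ne]
    linarith [le_abs_self a]

theorem nonNash_stabilized (a b c d m h : ℝ)
    (hm : m = (a + d) / 2) (hh : h = (a - d) / 2)
    (hdet : Matrix.det !![a, b; c, d] > 0) (hmh : m < |h|) :
    ∃ τ : ℝ, τ > 0 ∧ IsHurwitz !![a, b; τ * c, τ * d] := by
  have hneg : a < 0 ∨ d < 0 := by
    by_contra! hnonneg
    have : |h| ≤ m := abs_le.mpr ⟨by linarith, by linarith⟩
    linarith
  obtain ⟨τ, hτ, htr⟩ := exists_pos_add_mul_neg hneg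
  refine ⟨τ, hτ, isHurwitz_of_trace_neg_of_det_pos (by simpa [trace_fin_two] using htr) ?_⟩
  have hscale : det !![a, b; τ * c, τ * d] = τ * det !![a, b; c, d] := by
    simp only [det_fin_two_of]; ring
  rw [hscale]
  exact mul_pos hτ hdet
end

section
/- Let J = !![a, b; c, d] be a real 2×2 matrix with b = c (the Jacobian of a scalar potential game). If J is Hurwitz, then a < 0 and d < 0. (In potential games, every stable fixed point of gradient play is a differential Nash equilibrium.) -/
lemma mem_spectrum_of_det (a b c d : ℝ) (μ : ℂ)
    (h : (μ - a) * (μ - d) - (b : ℂ) * c = 0) :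
    μ ∈ spectrum ℂ ((!![a, b; c, d]).map Complex.ofReal) := by
  rw [spectrum.mem_iff]
  intro hu
  rw [Matrix.isUnit_iff_isUnit_det] at hu
  have hdet : ((algebraMap ℂ (Matrix (Fin 2) (Fin 2) ℂ) μ) -
      (!![a, b; c, d]).map Complex.ofReal).det = (μ - a) * (μ - d) - (b : ℂ) * c := by
    simp [Matrix.det_fin_two, Matrix.algebraMap_matrix_apply, Matrix.map_apply]
  rw [hdet, h] at hu
  exact hu.ne_zero rfl

theorem potential_stable_implies_nash (a b c d : ℝ) (hbc : b = c)
    (hstable : IsHurwitz !![a, b; c, d]) : a < 0 ∧ d < 0 := by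
  subst hbc
  set s : ℝ := Real.sqrt ((a - d) ^ 2 + 4 * b ^ 2) with hs
  have hs0 : 0 ≤ s := Real.sqrt_nonneg _
  have hssq : s ^ 2 = (a - d) ^ 2 + 4 * b ^ 2 := by
    rw [hs, Real.sq_sqrt]; positivity
  set lam : ℝ := (a + d + s) / 2 with hlam
  have hmem : (lam : ℂ) ∈ spectrum ℂ ((!![a, b; b, d]).map Complex.ofReal) := by
    apply mem_spectrum_of_det
    have : ((lam : ℝ) - a) * ((lam : ℝ) - d) - b * b = 0 := by
      rw [hlam]; nlinarith [hssq]
    calc ((lam : ℂ) - a) * ((lam : ℂ) - d) - (b : ℂ) * b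
        = ((((lam : ℝ) - a) * ((lam : ℝ) - d) - b * b : ℝ) : ℂ) := by push_cast; ring
      _ = 0 := by rw [this]; norm_num
  have := hstable (lam : ℂ) hmem
  rw [Complex.ofReal_re] at this
  constructor <;> nlinarith [hssq, hs0]
end

section
/- Let J = !![a, b; c, d] be a real 2×2 matrix with c = −b (the Jacobian of a scalar zero-sum game). If a < 0 and d < 0, then J is Hurwitz. (In zero-sum games, every differential Nash equilibrium is a stable fixed point of gradient play.) -/
theorem zeroSum_nash_implies_stable (a b c d : ℝ) (hzs : c = -b)
    (ha : a < 0) (hd : d < 0) : IsHurwitz !![a, b; c, d] := by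
  intro μ hμ
  rw [spectrum.mem_iff] at hμ
  rw [Matrix.isUnit_iff_isUnit_det] at hμ
  have hdet : ((μ - a) * (μ - d) + b * b : ℂ) = 0 := by
    by_contra h
    apply hμ
    apply isUnit_iff_ne_zero.mpr
    have : (algebraMap ℂ (Matrix (Fin 2) (Fin 2) ℂ)) μ -
        (!![a, b; c, d] : Matrix (Fin 2) (Fin 2) ℝ).map Complex.ofReal
        = !![μ - a, -b; -c, μ - d] := by
      ext i j
      fin_cases i <;> fin_cases j <;>
        simp [Matrix.algebraMap_matrix_apply, Matrix.map_apply]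
    rw [this, Matrix.det_fin_two_of]
    intro h0
    apply h
    rw [hzs] at h0
    push_cast at h0
    ring_nf at h0 ⊢
    linear_combination h0
  -- split on imaginary part of μ
  set x := μ.re
  set y := μ.im
  have hre : (x - a) * (x - d) - y * y + b * b = 0 := by
    have := congrArg Complex.re hdet
    simpa [Complex.add_re, Complex.mul_re, Complex.sub_re, Complex.sub_im,
      Complex.ofReal_re, Complex.ofReal_im] using this
  have him : (x - a) * y + y * (x - d) = 0 := by
    have := congrArg Complex.im hdet
    simpa [Complex.add_im, Complex.mul_im, Complex.sub_re, Complex.sub_im,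
      Complex.ofReal_re, Complex.ofReal_im] using this
  by_cases hy : y = 0
  · -- real eigenvalue: (x-a)(x-d) = -b² ≤ 0, so x lies between a and d
    rw [hy] at hre
    have h1 : (x - a) * (x - d) ≤ 0 := by nlinarith
    rcases le_or_gt x a with h | h
    · exact lt_of_le_of_lt h ha
    · have : x - a > 0 := by linarith
      have : x - d ≤ 0 := by
        by_contra hc
        push_neg at hc
        nlinarith
      linarith
  · -- complex eigenvalue: 2x = a + d < 0
    have : x - a + (x - d) = 0 := by
      have := mul_eq_zero.mp (by linear_combination him : y * ((x - a) + (x - d)) = 0)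
      tauto
    linarith
end

section
/- Let J = !![a, b; c, d] be a real 2×2 matrix with a + d = 0 (the Jacobian of a scalar Hamiltonian game). Then it is not the case that a < 0 and d < 0, and J is not Hurwitz. (In Hamiltonian games, no fixed point is a differential Nash equilibrium and no fixed point of gradient play is exponentially stable.) -/
theorem hamiltonian_no_nash_no_stable (a b c d : ℝ) (ham : a + d = 0) :
    ¬ (a < 0 ∧ d < 0) ∧ ¬ IsHurwitz !![a, b; c, d] := by
  constructor
  · rintro ⟨ha, hd⟩; linarith
  · intro h
    obtain ⟨μ, hμ⟩ := IsAlgClosed.exists_pow_nat_eq ((a : ℂ) ^ 2 + b * c) zero_lt_two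
    have hd' : (d : ℂ) = -(a : ℂ) := by
      have : d = -a := by linarith
      simp [this]
    have key : ∀ z : ℂ, z ^ 2 = (a:ℂ)^2 + b*c →
        z ∈ spectrum ℂ ((!![a, b; c, d]).map Complex.ofReal) := by
      intro z hz
      rw [spectrum.mem_iff, Matrix.isUnit_iff_isUnit_det, isUnit_iff_ne_zero]
      simp only [not_ne_iff]
      have : (algebraMap ℂ (Matrix (Fin 2) (Fin 2) ℂ)) z - (!![a, b; c, d]).map Complex.ofReal
          = !![z - a, -b; -c, z - d] := by
        ext i j
        fin_cases i <;> fin_cases j <;>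
          simp [Matrix.algebraMap_eq_diagonal, Matrix.map_apply]
      rw [this, Matrix.det_fin_two_of]
      rw [hd']
      linear_combination hz
    have h1 := h μ (key μ hμ)
    have h2 := h (-μ) (key (-μ) (by rw [neg_pow]; simpa using hμ))
    simp at h2
    linarith
end

section
/- Let J = !![a, b; c, d] be a real 2×2 matrix with a = d (matching curvature). If J is Hurwitz, then a < 0 and d < 0. (In matching-curvature games, every stable fixed point of gradient play is a differential Nash equilibrium.) -/
lemma mem_spec_of_root (a b c d : ℝ) (μ : ℂ)
    (h : (μ - a) * (μ - d) - b * c = 0) :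
    μ ∈ spectrum ℂ ((!![a, b; c, d]).map Complex.ofReal) := by
  rw [spectrum.mem_iff]
  intro hu
  rw [Matrix.isUnit_iff_isUnit_det] at hu
  have hdet : (algebraMap ℂ (Matrix (Fin 2) (Fin 2) ℂ) μ -
      (!![a, b; c, d]).map Complex.ofReal).det = (μ - a) * (μ - d) - b * c := by
    simp [Matrix.algebraMap_eq_diagonal, Matrix.det_fin_two, Matrix.map_apply]
  rw [hdet, h] at hu
  exact hu.ne_zero rfl

theorem matchingCurvature_stable_implies_nash (a b c d : ℝ) (had : a = d)
    (hstable : IsHurwitz !![a, b; c, d]) : a < 0 ∧ d < 0 := by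
  subst had
  rcases le_or_gt 0 (b * c) with hbc | hbc
  · -- real eigenvalue a + √(bc)
    set s := Real.sqrt (b * c) with hs
    have hμ : ((a + s : ℝ) : ℂ) ∈ spectrum ℂ ((!![a, b; c, a]).map Complex.ofReal) := by
      apply mem_spec_of_root
      have h1 : (s : ℂ) * s = (b : ℂ) * c := by
        exact_mod_cast congrArg Complex.ofReal (Real.mul_self_sqrt hbc)
      push_cast
      linear_combination h1
    have := hstable _ hμ
    simp at this
    have hs0 : 0 ≤ s := Real.sqrt_nonneg _
    constructor <;> linarith
  · -- complex eigenvalue a + i√(-bc)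
    set s := Real.sqrt (-(b * c)) with hs
    have hμ : ((a : ℂ) + s * Complex.I) ∈ spectrum ℂ ((!![a, b; c, a]).map Complex.ofReal) := by
      apply mem_spec_of_root
      have h1 : (s : ℂ) * s = (-(b * c) : ℝ) := by
        norm_cast
        exact Real.mul_self_sqrt (by linarith)
      have : ((a:ℂ) + s * Complex.I - a) * ((a:ℂ) + s * Complex.I - a) - b * c
          = (s:ℂ) * s * (Complex.I * Complex.I) - b * c := by ring
      rw [this, Complex.I_mul_I, h1]
      push_cast
      ring
    have := hstable _ hμ
    simp at this
    exact ⟨this, this⟩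
end

section
/- Let J = fromBlocks A B C D be a complex block matrix, where A is d₁×d₁, B is d₁×d₂, C is d₂×d₁, and D is d₂×d₂. Suppose λ ∈ ℂ is an eigenvalue of J with eigenvector (x₁, x₂) ∈ ℂ^{d₁} × ℂ^{d₂} satisfying x₁ ≠ 0 and x₂ ≠ 0, i.e. A·x₁ + B·x₂ = λ·x₁ and C·x₁ + D·x₂ = λ·x₂. Let v = x₁/‖x₁‖ and w = x₂/‖x₂‖, and set α = ⟨Av, v⟩, β = ⟨Bw, v⟩, γ = ⟨Cv, w⟩, δ = ⟨Dw, w⟩ (standard complex inner products). Then λ² − λ(α + δ) + αδ − βγ = 0; that is, λ lies in the quadratic numerical range of J. -/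
/-!
Pairing the two block equations of `J x = λ x` with `v` and `w` turns them into
`‖x₁‖ α + ‖x₂‖ β = λ ‖x₁‖` and `‖x₁‖ γ + ‖x₂‖ δ = λ ‖x₂‖`: the vector `(‖x₁‖, ‖x₂‖)` is an
eigenvector of the compressed matrix `!![α, β; γ, δ]` for `λ`, so `λ` is a root of its
characteristic polynomial.
-/

open Matrix

theorem sq_sub_mul_add_mul_sub_mul_eq_zero_of_eigenvector {R : Type*} [CommRing R]
    [NoZeroDivisors R] {α β γ δ lam a b : R}
    (h₁ : a * α + b * β = lam * a) (h₂ : a * γ + b * δ = lam * b) (hab : a ≠ 0 ∨ b ≠ 0) :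
    lam ^ 2 - lam * (α + δ) + α * δ - β * γ = 0 := by
  have ha : (lam ^ 2 - lam * (α + δ) + α * δ - β * γ) * a = 0 := by
    linear_combination (δ - lam) * h₁ - β * h₂
  have hb : (lam ^ 2 - lam * (α + δ) + α * δ - β * γ) * b = 0 := by
    linear_combination (α - lam) * h₂ - γ * h₁
  rcases hab with hab | hab
  · exact (mul_eq_zero.mp ha).resolve_right hab
  · exact (mul_eq_zero.mp hb).resolve_right hab

namespace EuclideanSpace

variable {𝕜 ι κ : Type*} [RCLike 𝕜] [Fintype ι] [Fintype κ]

theorem eq_norm_smul_inv_norm_smul (x : EuclideanSpace 𝕜 ι) :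
    x = (‖x‖ : 𝕜) • (‖x‖⁻¹ • x) := by
  rcases eq_or_ne x 0 with rfl | hx
  · simp
  · rw [RCLike.real_smul_eq_coe_smul (K := 𝕜), smul_smul, ← RCLike.ofReal_mul,
      mul_inv_cancel₀ (norm_ne_zero_iff.mpr hx), RCLike.ofReal_one, one_smul]

theorem star_dotProduct_of_eq_inv_norm_smul {x u : EuclideanSpace 𝕜 ι}
    (hu : u = ‖x‖⁻¹ • x) : star u.ofLp ⬝ᵥ x.ofLp = ‖x‖ := by
  rw [dotProduct_comm, ← inner_eq_star_dotProduct, hu, RCLike.real_smul_eq_coe_smul (K := 𝕜),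
    inner_smul_real_left, inner_self_eq_norm_sq_to_K, RCLike.real_smul_eq_coe_smul (K := 𝕜),
    smul_eq_mul, ← RCLike.ofReal_pow, ← RCLike.ofReal_mul, inv_mul_eq_div, pow_two,
    mul_self_div_self]

theorem dotProduct_mulVec_of_eq_inv_norm_smul {x u : EuclideanSpace 𝕜 ι}
    (hu : u = ‖x‖⁻¹ • x) (y : κ → 𝕜) (M : Matrix κ ι 𝕜) :
    y ⬝ᵥ M *ᵥ x.ofLp = ‖x‖ * (y ⬝ᵥ M *ᵥ u.ofLp) := by
  conv_lhs => rw [eq_norm_smul_inv_norm_smul x, ← hu]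
  rw [WithLp.ofLp_smul, mulVec_smul, dotProduct_smul, smul_eq_mul]

end EuclideanSpace

open EuclideanSpace in
theorem eigenvalue_mem_quadratic_numerical_range_general (d₁ d₂ : ℕ)
    (A : Matrix (Fin d₁) (Fin d₁) ℂ) (B : Matrix (Fin d₁) (Fin d₂) ℂ)
    (C : Matrix (Fin d₂) (Fin d₁) ℂ) (D : Matrix (Fin d₂) (Fin d₂) ℂ)
    (lam : ℂ)
    (x₁ : EuclideanSpace ℂ (Fin d₁)) (x₂ : EuclideanSpace ℂ (Fin d₂))
    (hx₁ : x₁ ≠ 0)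
    (h₁ : A.mulVec x₁ + B.mulVec x₂ = lam • (x₁ : Fin d₁ → ℂ))
    (h₂ : C.mulVec x₁ + D.mulVec x₂ = lam • (x₂ : Fin d₂ → ℂ))
    (v : EuclideanSpace ℂ (Fin d₁)) (w : EuclideanSpace ℂ (Fin d₂))
    (hv : v = ‖x₁‖⁻¹ • x₁) (hw : w = ‖x₂‖⁻¹ • x₂)
    (α β γ δ : ℂ)
    (hα : α = dotProduct (star (v : Fin d₁ → ℂ)) (A.mulVec v))
    (hβ : β = dotProduct (star (v : Fin d₁ → ℂ)) (B.mulVec w))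
    (hγ : γ = dotProduct (star (w : Fin d₂ → ℂ)) (C.mulVec v))
    (hδ : δ = dotProduct (star (w : Fin d₂ → ℂ)) (D.mulVec w)) :
    lam ^ 2 - lam * (α + δ) + α * δ - β * γ = 0 := by
  have e₁ : (‖x₁‖ : ℂ) * α + ‖x₂‖ * β = lam * ‖x₁‖ := by
    have h := congrArg (star v.ofLp ⬝ᵥ ·) h₁
    simp only [dotProduct_add, dotProduct_smul, smul_eq_mul] at h
    rwa [dotProduct_mulVec_of_eq_inv_norm_smul hv, dotProduct_mulVec_of_eq_inv_norm_smul hw,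
      star_dotProduct_of_eq_inv_norm_smul hv, ← hα, ← hβ] at h
  have e₂ : (‖x₁‖ : ℂ) * γ + ‖x₂‖ * δ = lam * ‖x₂‖ := by
    have h := congrArg (star w.ofLp ⬝ᵥ ·) h₂
    simp only [dotProduct_add, dotProduct_smul, smul_eq_mul] at h
    rwa [dotProduct_mulVec_of_eq_inv_norm_smul hv, dotProduct_mulVec_of_eq_inv_norm_smul hw,
      star_dotProduct_of_eq_inv_norm_smul hw, ← hγ, ← hδ] at h
  exact sq_sub_mul_add_mul_sub_mul_eq_zero_of_eigenvector e₁ e₂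
    (Or.inl (Complex.ofReal_ne_zero.mpr (norm_ne_zero_iff.mpr hx₁)))

theorem eigenvalue_mem_quadratic_numerical_range (d₁ d₂ : ℕ)
    (A : Matrix (Fin d₁) (Fin d₁) ℂ) (B : Matrix (Fin d₁) (Fin d₂) ℂ)
    (C : Matrix (Fin d₂) (Fin d₁) ℂ) (D : Matrix (Fin d₂) (Fin d₂) ℂ)
    (lam : ℂ)
    (x₁ : EuclideanSpace ℂ (Fin d₁)) (x₂ : EuclideanSpace ℂ (Fin d₂))
    (hx₁ : x₁ ≠ 0) (hx₂ : x₂ ≠ 0)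
    (h₁ : A.mulVec x₁ + B.mulVec x₂ = lam • (x₁ : Fin d₁ → ℂ))
    (h₂ : C.mulVec x₁ + D.mulVec x₂ = lam • (x₂ : Fin d₂ → ℂ))
    (v : EuclideanSpace ℂ (Fin d₁)) (w : EuclideanSpace ℂ (Fin d₂))
    (hv : v = ‖x₁‖⁻¹ • x₁) (hw : w = ‖x₂‖⁻¹ • x₂)
    (α β γ δ : ℂ)
    (hα : α = dotProduct (star (v : Fin d₁ → ℂ)) (A.mulVec v))
    (hβ : β = dotProduct (star (v : Fin d₁ → ℂ)) (B.mulVec w))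
    (hγ : γ = dotProduct (star (w : Fin d₂ → ℂ)) (C.mulVec v))
    (hδ : δ = dotProduct (star (w : Fin d₂ → ℂ)) (D.mulVec w)) :
    lam ^ 2 - lam * (α + δ) + α * δ - β * γ = 0 :=
  eigenvalue_mem_quadratic_numerical_range_general d₁ d₂ A B C D lam x₁ x₂ hx₁ h₁ h₂ v w hv hw α β γ
    δ hα hβ hγ hδ
end

section
/- Consider the real 4×4 matrix J = !![1, 0, −7, 0; 0, −5, 0, 3; 7, 0, −4, 0; 0, −3, 0, −12] (the game Jacobian at the origin of the zero-sum game with cost f(x,y) = −x₁²/2 + 5x₂²/2 + 7y₁x₁ − 3y₂x₂ − 2y₁² − 6y₂², in coordinates (x₁, x₂, y₁, y₂)). Then every complex eigenvalue of J has negative real part (J is Hurwitz), yet the upper-left 2×2 block !![1, 0; 0, −5] is not negative definite. Hence the origin is an exponentially stable fixed point of gradient play but not a differential Nash equilibrium. -/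
open Polynomial

theorem Complex.re_neg_of_sq_add_mul_add_eq_zero {b c : ℝ} (hb : 0 < b) (hc : 0 < c) {μ : ℂ}
    (h : μ ^ 2 + b * μ + c = 0) : μ.re < 0 := by
  have hre := congrArg re h
  have him := congrArg im h
  simp only [sq, add_re, mul_re, ofReal_re, ofReal_im, add_im, mul_im, zero_re, zero_im] at hre him
  by_contra! hx
  have hy : μ.im = 0 := by
    have : μ.im * (2 * μ.re + b) = 0 := by linarith
    exact (mul_eq_zero.1 this).resolve_right (by linarith)
  rw [hy] at hre
  nlinarith

theorem IsHurwitz.of_charpoly_eq_mul {n : ℕ} {J : Matrix (Fin n) (Fin n) ℝ} {b₁ c₁ b₂ c₂ : ℝ}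
    (hb₁ : 0 < b₁) (hc₁ : 0 < c₁) (hb₂ : 0 < b₂) (hc₂ : 0 < c₂)
    (hJ : J.charpoly = (X ^ 2 + C b₁ * X + C c₁) * (X ^ 2 + C b₂ * X + C c₂)) :
    IsHurwitz J := by
  intro μ hμ
  rw [Matrix.mem_spectrum_iff_isRoot_charpoly,
    show J.map Complex.ofReal = J.map Complex.ofRealHom from rfl, Matrix.charpoly_map, hJ] at hμ
  simp only [Polynomial.map_mul, Polynomial.map_add, Polynomial.map_pow, map_X, map_C,
    Complex.ofRealHom_eq_coe, IsRoot.def, eval_mul, eval_add, eval_pow, eval_X, eval_C,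
    mul_eq_zero] at hμ
  rcases hμ with h | h
  · exact Complex.re_neg_of_sq_add_mul_add_eq_zero hb₁ hc₁ h
  · exact Complex.re_neg_of_sq_add_mul_add_eq_zero hb₂ hc₂ h

theorem charpoly_example_jacobian :
    (!![(1 : ℝ), 0, -7, 0; 0, -5, 0, 3; 7, 0, -4, 0; 0, -3, 0, -12]).charpoly =
      (X ^ 2 + C 3 * X + C 45) * (X ^ 2 + C 17 * X + C 69) := by
  simp [Matrix.charpoly, Matrix.det_succ_row_zero, Fin.sum_univ_succ, Fin.succAbove, map_ofNat C]
  ring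

theorem example_stable_but_not_nash :
    IsHurwitz !![(1 : ℝ), 0, -7, 0; 0, -5, 0, 3; 7, 0, -4, 0; 0, -3, 0, -12] ∧
      ¬ Matrix.PosDef (-(!![(1 : ℝ), 0; 0, -5])) := by
  refine ⟨IsHurwitz.of_charpoly_eq_mul (by norm_num) (by norm_num) (by norm_num) (by norm_num)
    charpoly_example_jacobian, fun hPD => ?_⟩
  have h := hPD.diag_pos (i := 0)
  norm_num at h
end

section
/- Let f₁, f₂ : ℝ^{d₁} × ℝ^{d₂} → ℝ be twice continuously differentiable, and let x = (x₁, x₂). Suppose for each player i the partial derivative of f_i in its own variable vanishes at x (D₁f₁(x₁, x₂) = 0 and D₂f₂(x₁, x₂) = 0) and the individual Hessian in its own variable is positive definite at x (D₁²f₁(x) ≻ 0 and D₂²f₂(x) ≻ 0), i.e. x is a differential Nash equilibrium. Then x is a strict local Nash equilibrium: there exist neighborhoods W₁ of x₁ and W₂ of x₂ such that f₁(x₁, x₂) < f₁(x₁′, x₂) for all x₁′ ∈ W₁ with x₁′ ≠ x₁, and f₂(x₁, x₂) < f₂(x₁, x₂′) for all x₂′ ∈ W₂ with x₂′ ≠ x₂.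 -/
/-!
Restricted to its own variable, each player's cost is a C² function whose derivative vanishes at
the equilibrium and whose Hessian there is positive definite. In finite dimensions a positive
definite form is coercive, and coercivity survives small perturbations, so by continuity the
Hessian stays positive definite on a ball around the point. Along each segment leaving the
centre, the cost then has vanishing first derivative at the start and positive second derivative,
so it strictly increases.
-/

open Set Filter Topology

section

variable {E : Type*} [NormedAddCommGroup E] [NormedSpace ℝ E]

theorem isCoercive_of_pos [FiniteDimensional ℝ E] {B : E →L[ℝ] E →L[ℝ] ℝ}
    (hB : ∀ v ≠ 0, 0 < B v v) : IsCoercive B := by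
  rcases subsingleton_or_nontrivial E with hE | hE
  · exact ⟨1, one_pos, fun u => by simp [Subsingleton.elim u 0]⟩
  obtain ⟨v₀, hv₀, hmin⟩ := (isCompact_sphere (0 : E) 1).exists_isMinOn
    (NormedSpace.sphere_nonempty.2 zero_le_one)
    (B.continuous₂.comp (continuous_id.prodMk continuous_id)).continuousOn
  refine ⟨B v₀ v₀, hB v₀ (ne_zero_of_mem_unit_sphere ⟨v₀, hv₀⟩), fun u => ?_⟩
  rcases eq_or_ne u 0 with rfl | hu
  · simp
  have hmin_u : B v₀ v₀ ≤ ‖u‖⁻¹ * ‖u‖⁻¹ * B u u := by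
    simpa [norm_smul, hu, mul_assoc] using hmin (a := ‖u‖⁻¹ • u) (by simp [norm_smul, hu])
  calc B v₀ v₀ * ‖u‖ * ‖u‖ ≤ ‖u‖⁻¹ * ‖u‖⁻¹ * B u u * ‖u‖ * ‖u‖ := by gcongr
    _ = B u u := by field_simp

theorem IsCoercive.eventually_pos {X : Type*} [TopologicalSpace X]
    {H : X → E →L[ℝ] E →L[ℝ] ℝ} {a : X} (hc : IsCoercive (H a)) (hH : ContinuousAt H a) :
    ∀ᶠ y in 𝓝 a, ∀ v ≠ 0, 0 < H y v v := by
  obtain ⟨C, hC, hCH⟩ := hc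
  filter_upwards [hH.eventually (Metric.ball_mem_nhds (H a) hC)] with y hy v hv
  -- `rw [dist_eq_norm] at hy` fails to match the norm instance on the iterated `→L[ℝ]` here
  replace hy : ‖H y - H a‖ < C := dist_eq_norm (H y) (H a) ▸ hy
  have hv₀ : 0 < ‖v‖ := norm_pos_iff.2 hv
  have hdiff : |(H y - H a) v v| ≤ ‖H y - H a‖ * ‖v‖ * ‖v‖ := (H y - H a).le_opNorm₂ v v
  have hsplit : H y v v = H a v v + (H y - H a) v v := by simp
  nlinarith [abs_le.1 hdiff, hCH v, mul_pos hv₀ hv₀]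

theorem lt_of_deriv_eq_zero_of_deriv2_pos {φ ψ ψ' : ℝ → ℝ} {a b : ℝ} (hab : a < b)
    (hφ : ∀ t ∈ Icc a b, HasDerivAt φ (ψ t) t) (hψ : ∀ t ∈ Icc a b, HasDerivAt ψ (ψ' t) t)
    (hψ' : ∀ t ∈ Ioo a b, 0 < ψ' t) (hψa : ψ a = 0) : φ a < φ b := by
  have hψ_mono : StrictMonoOn ψ (Icc a b) := by
    refine strictMonoOn_of_hasDerivWithinAt_pos (convex_Icc a b)
      (fun t ht => (hψ t ht).continuousAt.continuousWithinAt)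
      (fun t ht => (hψ t (interior_subset ht)).hasDerivWithinAt) ?_
    rwa [interior_Icc]
  have hφ_mono : StrictMonoOn φ (Icc a b) := by
    refine strictMonoOn_of_hasDerivWithinAt_pos (convex_Icc a b)
      (fun t ht => (hφ t ht).continuousAt.continuousWithinAt)
      (fun t ht => (hφ t (interior_subset ht)).hasDerivWithinAt) ?_
    rw [interior_Icc]
    intro t ht
    exact hψa ▸ hψ_mono (left_mem_Icc.2 hab.le) (Ioo_subset_Icc_self ht) ht.1
  exact hφ_mono (left_mem_Icc.2 hab.le) (right_mem_Icc.2 hab.le) hab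

theorem Convex.lt_of_fderiv_eq_zero_of_hessian_pos {s : Set E} (hs : Convex ℝ s) {g : E → ℝ}
    {g' : E → E →L[ℝ] ℝ} {g'' : E → E →L[ℝ] E →L[ℝ] ℝ}
    (hg : ∀ y ∈ s, HasFDerivAt g (g' y) y) (hg' : ∀ y ∈ s, HasFDerivAt g' (g'' y) y)
    (hpos : ∀ y ∈ s, ∀ v ≠ 0, 0 < g'' y v v) {a x : E} (ha : a ∈ s) (hx : x ∈ s)
    (hxa : x ≠ a) (hg'a : g' a = 0) : g a < g x := by
  set L : ℝ → E := fun t => AffineMap.lineMap a x t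
  have hL : ∀ t ∈ Icc (0 : ℝ) 1, L t ∈ s := fun t ht => hs.lineMap_mem ha hx ht
  have key := lt_of_deriv_eq_zero_of_deriv2_pos (φ := g ∘ L) (ψ := fun t => g' (L t) (x - a))
    (ψ' := fun t => g'' (L t) (x - a) (x - a)) zero_lt_one
    (fun t ht => (hg _ (hL t ht)).comp_hasDerivAt t AffineMap.hasDerivAt_lineMap)
    (fun t ht => ((ContinuousLinearMap.apply ℝ ℝ (x - a)).hasFDerivAt.comp _
      (hg' _ (hL t ht))).comp_hasDerivAt t AffineMap.hasDerivAt_lineMap)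
    (fun t ht => hpos _ (hL t (Ioo_subset_Icc_self ht)) _ (sub_ne_zero.2 hxa))
    (by simp [L, hg'a])
  simpa [L] using key

theorem ContDiff.eventually_nhdsNE_lt_of_fderiv_eq_zero [FiniteDimensional ℝ E] {g : E → ℝ}
    (hg : ContDiff ℝ 2 g) {a : E} (hg'a : fderiv ℝ g a = 0)
    (hpos : ∀ v ≠ 0, 0 < fderiv ℝ (fderiv ℝ g) a v v) : ∀ᶠ x in 𝓝[≠] a, g a < g x := by
  have hg' : ContDiff ℝ 1 (fderiv ℝ g) := hg.fderiv_right le_rfl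
  obtain ⟨ε, hε, hball⟩ := Metric.eventually_nhds_iff_ball.1 <|
    (isCoercive_of_pos hpos).eventually_pos (hg'.continuous_fderiv one_ne_zero).continuousAt
  refine eventually_nhdsWithin_iff.2 <| eventually_of_mem (Metric.ball_mem_nhds a hε) ?_
  exact fun x hx hxa => (convex_ball a ε).lt_of_fderiv_eq_zero_of_hessian_pos
    (fun y _ => (hg.differentiable two_ne_zero y).hasFDerivAt)
    (fun y _ => (hg'.differentiable one_ne_zero y).hasFDerivAt) hball
    (Metric.mem_ball_self hε) hx hxa hg'a

end

theorem differentialNash_implies_strict_local_nash (d₁ d₂ : ℕ)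
    (f₁ f₂ : EuclideanSpace ℝ (Fin d₁) × EuclideanSpace ℝ (Fin d₂) → ℝ)
    (hf₁ : ContDiff ℝ 2 f₁) (hf₂ : ContDiff ℝ 2 f₂)
    (x₁ : EuclideanSpace ℝ (Fin d₁)) (x₂ : EuclideanSpace ℝ (Fin d₂))
    (hD₁ : fderiv ℝ (fun y => f₁ (y, x₂)) x₁ = 0)
    (hD₂ : fderiv ℝ (fun y => f₂ (x₁, y)) x₂ = 0)
    (hH₁ : ∀ v : EuclideanSpace ℝ (Fin d₁), v ≠ 0 →
      0 < fderiv ℝ (fun y => fderiv ℝ (fun z => f₁ (z, x₂)) y) x₁ v v)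
    (hH₂ : ∀ v : EuclideanSpace ℝ (Fin d₂), v ≠ 0 →
      0 < fderiv ℝ (fun y => fderiv ℝ (fun z => f₂ (x₁, z)) y) x₂ v v) :
    (∃ W₁ ∈ nhds x₁, ∀ x₁' ∈ W₁, x₁' ≠ x₁ → f₁ (x₁, x₂) < f₁ (x₁', x₂)) ∧
    (∃ W₂ ∈ nhds x₂, ∀ x₂' ∈ W₂, x₂' ≠ x₂ → f₂ (x₁, x₂) < f₂ (x₁, x₂')) := by
  have h₁ : ∀ᶠ y in 𝓝[≠] x₁, f₁ (x₁, x₂) < f₁ (y, x₂) :=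
    (hf₁.comp (contDiff_id.prodMk contDiff_const)).eventually_nhdsNE_lt_of_fderiv_eq_zero hD₁ hH₁
  have h₂ : ∀ᶠ y in 𝓝[≠] x₂, f₂ (x₁, x₂) < f₂ (x₁, y) :=
    (hf₂.comp (contDiff_const.prodMk contDiff_id)).eventually_nhdsNE_lt_of_fderiv_eq_zero hD₂ hH₂
  exact ⟨⟨_, eventually_nhdsWithin_iff.1 h₁, fun _ hy hne => hy hne⟩,
    ⟨_, eventually_nhdsWithin_iff.1 h₂, fun _ hy hne => hy hne⟩⟩
end
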